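/- arXiv:2503.18165 — 6 statements merged into one kernel-verified Lean document; each statement's English description precedes it below -/
import Mathlib

section
/- Let 𝒳 be a d-dimensional trajectory set and (X,k) a node, and set A = ΔX(𝒳_{(X,k)}) = {X'_{k+1} − X'_k : X' ∈ 𝒳_{(X,k)}} ⊆ ℝ^d (a nonempty set). Then (X,k) is an arbitrage-free node, i.e. for every h ∈ ℝ^d either h·y = 0 for all y ∈ A or inf_{y∈A} h·y < 0, if and only if 0 belongs to the relative interior of the convex hull of A. -/
open scoped InnerProductSpace ENNReal
open Finset

namespace Traj

variable {E : Type*} [NormedAddCommGroup E] [InnerProductSpace ℝ E]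

/-- A trajectory set: a nonempty set of sequences sharing a common initial value. -/
def IsTrajectorySet (T : Set (ℕ → E)) (x0 : E) : Prop :=
  T.Nonempty ∧ ∀ X ∈ T, X 0 = x0

/-- The conditional trajectory set at the node `(X, k)`. -/
def condSet (T : Set (ℕ → E)) (X : ℕ → E) (k : ℕ) : Set (ℕ → E) :=
  {Y | Y ∈ T ∧ ∀ i ≤ k, Y i = X i}

/-- Non-anticipativity of a family `(G i)_{i ≥ j}` of functions on the conditional set. -/
def NonAnticipative (T : Set (ℕ → E)) (X : ℕ → E) (j : ℕ)
    {F : Type*} (G : ℕ → (ℕ → E) → F) : Prop :=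
  ∀ i, j ≤ i → ∀ Y ∈ condSet T X j, ∀ Z ∈ condSet T X j,
    (∀ k, j ≤ k → k ≤ i → Y k = Z k) → G i Y = G i Z

/-- The simple portfolio payoff `Π^{V,H}_{j,n}`. -/
noncomputable def piPort (H : ℕ → (ℕ → E) → E) (j n : ℕ) (V : ℝ) (Y : ℕ → E) : ℝ :=
  V + ∑ i ∈ Finset.Ico j n, ⟪H i Y, Y (i + 1) - Y i⟫_ℝ

/-- The total initial cost `Σ_{m ≥ 0} V^m` of a generalized portfolio (`V^m ≥ 0` for `m ≥ 1`). -/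
noncomputable def SuperhedgeCost (V : ℕ → ℝ) : EReal :=
  (V 0 : EReal) + ((∑' m : ℕ, ENNReal.ofReal (V (m + 1)) : ℝ≥0∞) : EReal)

/-- `(V, H, n)` is a generalized superhedge of `f` at node `(X, j)`: `f_0 = Π^{V⁰,H⁰}_{j,n₀}`
and, for `m ≥ 1`, `f_m = Π^{Vᵐ,Hᵐ}_{j,n_m}` with `Π^{Vᵐ,Hᵐ}_{j,n} ≥ 0` for all `n ≥ j`,
and `f ≤ Σ_{m ≥ 0} f_m` on the conditional set. -/
def IsSuperhedge (T : Set (ℕ → E)) (X : ℕ → E) (j : ℕ) (f : (ℕ → E) → EReal)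
    (V : ℕ → ℝ) (H : ℕ → ℕ → (ℕ → E) → E) (n : ℕ → ℕ) : Prop :=
  (∀ m, NonAnticipative T X j (H m)) ∧ (∀ m, j ≤ n m) ∧
  (∀ m, 1 ≤ m → ∀ k, j ≤ k → ∀ Y ∈ condSet T X j, 0 ≤ piPort (H m) j k (V m) Y) ∧
  (∀ Y ∈ condSet T X j,
    f Y ≤ (piPort (H 0) j (n 0) (V 0) Y : EReal)
      + ((∑' m : ℕ, ENNReal.ofReal (piPort (H (m + 1)) j (n (m + 1)) (V (m + 1)) Y) :
          ℝ≥0∞) : EReal))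

/-- The conditional superhedging operator `σ̄_j f (X)`. -/
noncomputable def sigmaUp (T : Set (ℕ → E)) (X : ℕ → E) (j : ℕ)
    (f : (ℕ → E) → EReal) : EReal :=
  sInf {c : EReal | ∃ V H n, IsSuperhedge T X j f V H n ∧ c = SuperhedgeCost V}

/-- The conditional underhedging operator `σ̲_j f = -σ̄_j (-f)`. -/
noncomputable def sigmaDown (T : Set (ℕ → E)) (X : ℕ → E) (j : ℕ)
    (f : (ℕ → E) → EReal) : EReal :=
  - sigmaUp T X j (fun Y => - f Y)

/-- Hedge data for the conditional norm operator: all portfolios are nonnegative. -/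
def IsNormHedge (T : Set (ℕ → E)) (X : ℕ → E) (j : ℕ) (f : (ℕ → E) → ℝ≥0∞)
    (V : ℕ → ℝ) (H : ℕ → ℕ → (ℕ → E) → E) (n : ℕ → ℕ) : Prop :=
  (∀ m, NonAnticipative T X j (H m)) ∧ (∀ m, j ≤ n m) ∧
  (∀ m, ∀ k, j ≤ k → ∀ Y ∈ condSet T X j, 0 ≤ piPort (H m) j k (V m) Y) ∧
  (∀ Y ∈ condSet T X j,
    f Y ≤ ∑' m : ℕ, ENNReal.ofReal (piPort (H m) j (n m) (V m) Y))

/-- The conditional norm operator `Ī_j f (X)` (for nonnegative extended-real `f`). -/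
noncomputable def Ibar (T : Set (ℕ → E)) (X : ℕ → E) (j : ℕ)
    (f : (ℕ → E) → ℝ≥0∞) : ℝ≥0∞ :=
  sInf {c : ℝ≥0∞ | ∃ V H n, IsNormHedge T X j f V H n ∧
    c = ∑' m : ℕ, ENNReal.ofReal (V m)}

/-- `A` is conditionally null at the node `(X, j)`. -/
def NullAt (T : Set (ℕ → E)) (X : ℕ → E) (j : ℕ) (A : Set (ℕ → E)) : Prop :=
  Ibar T X j (A.indicator fun _ => (1 : ℝ≥0∞)) = 0

/-- `A` is a (global) null set. -/
def IsNull (T : Set (ℕ → E)) (A : Set (ℕ → E)) : Prop :=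
  ∀ X ∈ T, NullAt T X 0 A

/-- Property `(L_{(X,j)})`. -/
def PropertyL (T : Set (ℕ → E)) (X : ℕ → E) (j : ℕ) : Prop :=
  ∀ V H n, IsSuperhedge T X j (fun _ => (0 : EReal)) V H n →
    (0 : EReal) ≤ SuperhedgeCost V

/-- `(X, k)` is an arbitrage-free node. -/
def ArbitrageFreeNode (T : Set (ℕ → E)) (X : ℕ → E) (k : ℕ) : Prop :=
  ∀ h : E, (∀ Y ∈ condSet T X k, ⟪h, Y (k + 1) - Y k⟫_ℝ = 0) ∨
    (⨅ Y ∈ condSet T X k, ((⟪h, Y (k + 1) - Y k⟫_ℝ : ℝ) : EReal)) < 0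

/-- The set `𝒩` of trajectories passing (non-constantly) through an arbitrage node. -/
def arbNull (T : Set (ℕ → E)) : Set (ℕ → E) :=
  {X | X ∈ T ∧ ∃ j : ℕ, ¬ ArbitrageFreeNode T X j ∧ X (j + 1) ≠ X j}

/-- Property `(L)`-a.e. -/
def LaeHolds (T : Set (ℕ → E)) : Prop :=
  (∀ X ∈ T \ arbNull T, ∀ k, 1 ≤ k → PropertyL T X k) ∧
  (∀ X ∈ T, PropertyL T X 0)

/-- A bounded non-anticipative stopping rule. -/
def BoundedStoppingRule (T : Set (ℕ → E)) (N : (ℕ → E) → ℕ) : Prop :=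
  (∃ nstar, ∀ X ∈ T, N X ≤ nstar) ∧
  (∀ k : ℕ, ∀ X ∈ T, ∀ Y ∈ T, (∀ i ≤ k, X i = Y i) → (N X ≤ k ↔ N Y ≤ k))

end Traj

/-!
Both conditions say that no linear functional `⟪h, ·⟫` is nonnegative on the increment set `A`
without vanishing on it; as half-spaces and hyperplanes are convex, this passes from `A` to
`C = conv A`. If `0 ∈ ri C`, then from `0` one can move a little away from any `z ∈ C` inside
`aff C` and stay in `C`, so `⟪h, ·⟫ ≥ 0` on `C` forces `⟪h, z⟫ = 0`. If `0 ∉ ri C`, either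
`0 ∉ aff C`, and the orthogonal projection `q` of `0` onto `aff C` satisfies `⟪q, y⟫ = ‖q‖² > 0`
on `aff C`; or `aff C` is the linear subspace `W = direction (aff C)`, in which `C` has nonempty
interior avoiding `0`, and Hahn–Banach in `W` yields a functional `≥ 0` on `C` and `> 0` at an
interior point.
-/

open Set Filter Topology

theorem Convex.exists_le_lt_of_notMem_interior {F : Type*} [TopologicalSpace F] [AddCommGroup F]
    [Module ℝ F] [IsTopologicalAddGroup F] [ContinuousSMul ℝ F] {s : Set F} (hs : Convex ℝ s)
    {w x : F} (hw : w ∈ interior s) (hx : x ∉ interior s) :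
    ∃ f : StrongDual ℝ F, (∀ z ∈ s, f z ≤ f x) ∧ f w < f x := by
  obtain ⟨f, hf⟩ := geometric_hahn_banach_open_point hs.interior isOpen_interior hx
  refine ⟨f, fun z hz => ?_, hf w hw⟩
  have hz : z ∈ closure (interior s) := by
    rw [hs.closure_interior_eq_closure_of_nonempty_interior ⟨w, hw⟩]
    exact subset_closure hz
  exact closure_minimal (fun y hy => (hf y hy).le) (isClosed_Iic.preimage f.continuous) hz

theorem LinearMap.eq_zero_of_nonneg_of_mem_nhds_zero {F : Type*} [TopologicalSpace F]
    [AddCommGroup F] [Module ℝ F] [ContinuousSMul ℝ F] (f : F →ₗ[ℝ] ℝ) {s : Set F}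
    (hs : s ∈ 𝓝 0) (hf : ∀ z ∈ s, 0 ≤ f z) : f = 0 := by
  ext z
  have hline : ∀ᶠ t : ℝ in 𝓝 0, t • z ∈ s :=
    (continuous_id.smul continuous_const).tendsto' 0 0 (zero_smul ℝ z) |>.eventually hs
  obtain ⟨t, hts, ht⟩ := (hline.filter_mono nhdsWithin_le_nhds |>.and
    (self_mem_nhdsWithin (s := Iio 0))).exists
  obtain ⟨u, hus, hu⟩ := (hline.filter_mono nhdsWithin_le_nhds |>.and
    (self_mem_nhdsWithin (s := Ioi 0))).exists
  have h1 := hf _ hts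
  have h2 := hf _ hus
  rw [map_smul, smul_eq_mul] at h1 h2
  simp only [LinearMap.zero_apply]
  nlinarith [show t < 0 from ht, show 0 < u from hu]

section

variable {E : Type*} [AddCommGroup E] [Module ℝ E] {s : Set E}

theorem mem_direction_affineSpan_of_zero_mem (h0 : (0 : E) ∈ affineSpan ℝ s) {z : E}
    (hz : z ∈ s) : z ∈ (affineSpan ℝ s).direction := by
  simpa using (AffineSubspace.vsub_right_mem_direction_iff_mem h0 z).2 (subset_affineSpan ℝ s hz)

variable [TopologicalSpace E]

theorem intrinsicInterior_eq_image_interior_of_zero_mem_affineSpan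
    (h0 : (0 : E) ∈ affineSpan ℝ s) :
    intrinsicInterior ℝ s =
      (↑) '' interior ((↑) ⁻¹' s : Set (affineSpan ℝ s).direction) := by
  set W := (affineSpan ℝ s).direction
  have hspan : affineSpan ℝ s = W.toAffineSubspace := by
    ext x
    simpa using (AffineSubspace.vsub_right_mem_direction_iff_mem h0 x).symm
  rw [intrinsicInterior, hspan]
  -- `↥W.toAffineSubspace` and `↥W` are the same subtype of `E`
  rfl

theorem zero_mem_intrinsicInterior_iff_of_zero_mem_affineSpan (h0 : (0 : E) ∈ affineSpan ℝ s) :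
    (0 : E) ∈ intrinsicInterior ℝ s ↔
      (0 : (affineSpan ℝ s).direction) ∈ interior ((↑) ⁻¹' s) := by
  rw [intrinsicInterior_eq_image_interior_of_zero_mem_affineSpan h0]
  exact ⟨fun ⟨z, hz, hz0⟩ => (Subtype.ext hz0 : z = 0) ▸ hz, fun h => ⟨0, h, rfl⟩⟩

end

section

variable {E : Type*} [NormedAddCommGroup E] [InnerProductSpace ℝ E]

theorem AffineSubspace.exists_inner_eq_norm_sq_of_zero_notMem (P : AffineSubspace ℝ E)
    [Nonempty P] [P.direction.HasOrthogonalProjection] (h0 : (0 : E) ∉ P) :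
    ∃ h : E, h ≠ 0 ∧ ∀ y ∈ P, ⟪h, y⟫_ℝ = ‖h‖ ^ 2 := by
  set q := EuclideanGeometry.orthogonalProjection P (0 : E)
  refine ⟨q, fun hq0 => h0 (hq0 ▸ q.2), fun y hy => ?_⟩
  have horth : ⟪0 - (q : E), y - q⟫_ℝ = 0 :=
    Submodule.inner_left_of_mem_orthogonal (AffineSubspace.vsub_mem_direction hy q.2)
      (EuclideanGeometry.vsub_orthogonalProjection_mem_direction_orthogonal P 0)
  rw [zero_sub, inner_neg_left, inner_sub_right, real_inner_self_eq_norm_sq] at horth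
  linarith

variable [FiniteDimensional ℝ E] {C : Set E}

theorem exists_inner_nonneg_pos_of_zero_notMem_intrinsicInterior (hC : Convex ℝ C)
    (hne : C.Nonempty) (h0 : (0 : E) ∉ intrinsicInterior ℝ C) :
    ∃ h : E, (∀ z ∈ C, 0 ≤ ⟪h, z⟫_ℝ) ∧ ∃ z ∈ C, 0 < ⟪h, z⟫_ℝ := by
  by_cases hspan : (0 : E) ∈ affineSpan ℝ C
  · set W := (affineSpan ℝ C).direction
    have hri := intrinsicInterior_eq_image_interior_of_zero_mem_affineSpan hspan
    obtain ⟨_, ⟨w, hw, rfl⟩⟩ := hri ▸ hne.intrinsicInterior hC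
    have h0W : (0 : W) ∉ interior ((↑) ⁻¹' C) :=
      (zero_mem_intrinsicInterior_iff_of_zero_mem_affineSpan hspan).not.1 h0
    obtain ⟨f, hfC, hfw⟩ :=
      (hC.linear_preimage W.subtype).exists_le_lt_of_notMem_interior hw h0W
    set g := (InnerProductSpace.toDual ℝ W).symm f
    have hg : ∀ z : W, ⟪(g : E), z⟫_ℝ = f z := fun z =>
      (W.coe_inner g z).symm.trans InnerProductSpace.toDual_symm_apply
    rw [map_zero] at hfw
    have hwC : w ∈ (↑) ⁻¹' C := interior_subset hw
    refine ⟨-g, fun z hz => ?_, w, hwC, ?_⟩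
    · have hz' := mem_direction_affineSpan_of_zero_mem hspan hz
      have := hfC ⟨z, hz'⟩ hz
      rw [map_zero] at this
      rw [inner_neg_left, hg ⟨z, hz'⟩]
      linarith
    · rw [inner_neg_left, hg]
      linarith
  · have : Nonempty (affineSpan ℝ C) := (hne.mono (subset_affineSpan ℝ C)).to_subtype
    obtain ⟨h, hh0, hh⟩ := (affineSpan ℝ C).exists_inner_eq_norm_sq_of_zero_notMem hspan
    have hpos : 0 < ‖h‖ ^ 2 := pow_pos (norm_pos_iff.2 hh0) 2
    obtain ⟨z, hz⟩ := hne
    refine ⟨h, fun y hy => ?_, z, hz, ?_⟩ <;>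
      rw [hh _ (subset_affineSpan ℝ C ‹_›)] <;> linarith

theorem zero_mem_intrinsicInterior_iff_forall_inner (hC : Convex ℝ C) (hne : C.Nonempty) :
    (0 : E) ∈ intrinsicInterior ℝ C ↔
      ∀ h : E, C ⊆ {z | 0 ≤ ⟪h, z⟫_ℝ} → C ⊆ {z | ⟪h, z⟫_ℝ = 0} := by
  constructor
  · intro h0 h hh z hz
    have hspan : (0 : E) ∈ affineSpan ℝ C :=
      subset_affineSpan ℝ C (intrinsicInterior_subset h0)
    rw [zero_mem_intrinsicInterior_iff_of_zero_mem_affineSpan hspan,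
      mem_interior_iff_mem_nhds] at h0
    have hW := ((innerₛₗ ℝ h).comp (affineSpan ℝ C).direction.subtype
      ).eq_zero_of_nonneg_of_mem_nhds_zero h0 fun y hy => hh hy
    exact LinearMap.congr_fun hW ⟨z, mem_direction_affineSpan_of_zero_mem hspan hz⟩
  · contrapose!
    intro h0
    obtain ⟨h, hnonneg, z, hz, hpos⟩ :=
      exists_inner_nonneg_pos_of_zero_notMem_intrinsicInterior hC hne h0
    exact ⟨h, hnonneg, fun hzero => hpos.ne' (hzero hz)⟩

end

theorem zero_mem_intrinsicInterior_convexHull_iff {E : Type*} [NormedAddCommGroup E]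
    [InnerProductSpace ℝ E] [FiniteDimensional ℝ E] {A : Set E} (hA : A.Nonempty) :
    (0 : E) ∈ intrinsicInterior ℝ (convexHull ℝ A) ↔
      ∀ h : E, A ⊆ {z | 0 ≤ ⟪h, z⟫_ℝ} → A ⊆ {z | ⟪h, z⟫_ℝ = 0} := by
  rw [zero_mem_intrinsicInterior_iff_forall_inner (convex_convexHull ℝ A) hA.convexHull]
  exact forall_congr' fun h => imp_congr
    (convex_halfSpace_ge (innerₛₗ ℝ h).isLinear 0).convexHull_subset_iff
    (convex_hyperplane (innerₛₗ ℝ h).isLinear 0).convexHull_subset_iff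

namespace Traj

theorem arbitrageFreeNode_iff {E : Type*} [NormedAddCommGroup E] [InnerProductSpace ℝ E]
    (T : Set (ℕ → E)) (X : ℕ → E) (k : ℕ) :
    ArbitrageFreeNode T X k ↔ ∀ h : E,
      (fun Y => Y (k + 1) - Y k) '' condSet T X k ⊆ {z | 0 ≤ ⟪h, z⟫_ℝ} →
        (fun Y => Y (k + 1) - Y k) '' condSet T X k ⊆ {z | ⟪h, z⟫_ℝ = 0} := by
  simp [ArbitrageFreeNode, iInf_lt_iff, or_iff_not_imp_right, Set.subset_def]

theorem arbitrageFreeNode_iff_zero_mem_intrinsicInterior_general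
    (d : ℕ) (T : Set (ℕ → EuclideanSpace ℝ (Fin d)))
    (X : ℕ → EuclideanSpace ℝ (Fin d)) (hX : X ∈ T) (k : ℕ) :
    ArbitrageFreeNode T X k ↔
      (0 : EuclideanSpace ℝ (Fin d)) ∈
        intrinsicInterior ℝ
          (convexHull ℝ ((fun Y => Y (k + 1) - Y k) '' condSet T X k)) := by
  rw [arbitrageFreeNode_iff, zero_mem_intrinsicInterior_convexHull_iff]
  exact ⟨_, X, ⟨hX, fun _ _ => rfl⟩, rfl⟩

/-- a node is arbitrage-free iff `0` lies in the relative (intrinsic) interior of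
the convex hull of the set of increments at the node. -/
theorem arbitrageFreeNode_iff_zero_mem_intrinsicInterior
    (d : ℕ) (T : Set (ℕ → EuclideanSpace ℝ (Fin d))) (x0 : EuclideanSpace ℝ (Fin d))
    (hT : IsTrajectorySet T x0)
    (X : ℕ → EuclideanSpace ℝ (Fin d)) (hX : X ∈ T) (k : ℕ) :
    ArbitrageFreeNode T X k ↔
      (0 : EuclideanSpace ℝ (Fin d)) ∈
        intrinsicInterior ℝ
          (convexHull ℝ ((fun Y => Y (k + 1) - Y k) '' condSet T X k)) :=
  arbitrageFreeNode_iff_zero_mem_intrinsicInterior_general d T X hX k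

end Traj
end

section
/- Let 𝒳 be a 2-dimensional trajectory set with traded coordinates X_i = (X¹_i, X²_i), and let N : 𝒳 → ℕ be a bounded non-anticipative stopping rule (i.e. N(X) ≤ n* for all X, and whether N(X) ≤ k depends only on (X_0,…,X_k)). Define F(X) = X²_{N(X)}. Fix a node (X,j) with j ≤ N(X) and assume that property (L_{(X,j)}) holds. Then σ̲_j F(X) ≤ X²_j ≤ σ̄_j F(X). -/
open scoped InnerProductSpace ENNReal
open Finset

namespace Traj


/-- Second unit coordinate vector in `EuclideanSpace ℝ (Fin 2)`. -/
noncomputable def e1 : EuclideanSpace ℝ (Fin 2) := EuclideanSpace.single (1 : Fin 2) (1 : ℝ)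

lemma inner_e1 (v : EuclideanSpace ℝ (Fin 2)) : ⟪e1, v⟫_ℝ = v 1 := by
  simp [e1, EuclideanSpace.inner_single_left]

/-- The replicating strategy: hold `s` units of coordinate 2 until the stopping time. -/
noncomputable def repH (N : (ℕ → EuclideanSpace ℝ (Fin 2)) → ℕ) (s : ℝ) :
    ℕ → (ℕ → EuclideanSpace ℝ (Fin 2)) → EuclideanSpace ℝ (Fin 2) :=
  fun i Y => if i < N Y then s • e1 else 0

lemma repH_inner (N : (ℕ → EuclideanSpace ℝ (Fin 2)) → ℕ) (s : ℝ) (i : ℕ)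
    (Y : ℕ → EuclideanSpace ℝ (Fin 2)) (v : EuclideanSpace ℝ (Fin 2)) :
    ⟪repH N s i Y, v⟫_ℝ = if i < N Y then s * v 1 else 0 := by
  unfold repH
  split
  · rw [real_inner_smul_left, inner_e1]
  · simp

lemma telescope_coord (Y : ℕ → EuclideanSpace ℝ (Fin 2)) (j m : ℕ) (h : j ≤ m) :
    ∑ i ∈ Finset.Ico j m, ((Y (i + 1)) 1 - (Y i) 1) = Y m 1 - Y j 1 := by
  rw [Finset.sum_Ico_eq_sub _ h,
    Finset.sum_range_sub (f := fun i => Y i 1),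
    Finset.sum_range_sub (f := fun i => Y i 1)]
  ring

lemma rep_sum (N : (ℕ → EuclideanSpace ℝ (Fin 2)) → ℕ) (s : ℝ) (j n : ℕ)
    (Y : ℕ → EuclideanSpace ℝ (Fin 2)) (h1 : j ≤ N Y) (h2 : N Y ≤ n) :
    ∑ i ∈ Finset.Ico j n, ⟪repH N s i Y, Y (i + 1) - Y i⟫_ℝ
      = s * (Y (N Y) 1 - Y j 1) := by
  have hstep : ∀ i ∈ Finset.Ico j n, ⟪repH N s i Y, Y (i + 1) - Y i⟫_ℝ
      = if i < N Y then s * ((Y (i + 1)) 1 - (Y i) 1) else 0 := by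
    intro i _
    rw [repH_inner]
    simp
  rw [Finset.sum_congr rfl hstep, ← Finset.sum_filter, Finset.Ico_filter_lt,
    min_eq_right h2, ← Finset.mul_sum, telescope_coord Y j (N Y) h1]

lemma trunc_sum (H : ℕ → (ℕ → EuclideanSpace ℝ (Fin 2)) → EuclideanSpace ℝ (Fin 2))
    (Y : ℕ → EuclideanSpace ℝ (Fin 2)) (j n n' : ℕ) (h : n ≤ n') :
    ∑ i ∈ Finset.Ico j n', ⟪(if i < n then H i Y else 0), Y (i + 1) - Y i⟫_ℝ
      = ∑ i ∈ Finset.Ico j n, ⟪H i Y, Y (i + 1) - Y i⟫_ℝ := by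
  have hstep : ∀ i ∈ Finset.Ico j n', ⟪(if i < n then H i Y else 0), Y (i + 1) - Y i⟫_ℝ
      = if i < n then ⟪H i Y, Y (i + 1) - Y i⟫_ℝ else 0 := by
    intro i _; split <;> simp
  rw [Finset.sum_congr rfl hstep, ← Finset.sum_filter, Finset.Ico_filter_lt,
    min_eq_right h]

lemma ereal_shift (a b : ℝ) (t : ℝ≥0∞) :
    ((a : ℝ) : EReal) ≤ (b : EReal) + (t : EReal) ↔
      (0 : EReal) ≤ ((b - a : ℝ) : EReal) + (t : EReal) := by
  induction t using ENNReal.recTopCoe with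
  | top =>
    simp only [EReal.coe_ennreal_top]
    rw [EReal.add_top_of_ne_bot (EReal.coe_ne_bot _),
      EReal.add_top_of_ne_bot (EReal.coe_ne_bot _)]
    simp
  | coe r =>
    rw [EReal.coe_nnreal_eq_coe_real, ← EReal.coe_add, ← EReal.coe_add]
    rw [EReal.coe_le_coe_iff, ← EReal.coe_zero, EReal.coe_le_coe_iff]
    constructor <;> intro <;> linarith

lemma stop_ge (T : Set (ℕ → EuclideanSpace ℝ (Fin 2)))
    (N : (ℕ → EuclideanSpace ℝ (Fin 2)) → ℕ) (hN : BoundedStoppingRule T N)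
    (X : ℕ → EuclideanSpace ℝ (Fin 2)) (hX : X ∈ T) (j : ℕ) (hj : j ≤ N X)
    (Y : ℕ → EuclideanSpace ℝ (Fin 2)) (hY : Y ∈ condSet T X j) : j ≤ N Y := by
  by_contra hlt
  push_neg at hlt
  have hk : ∀ i ≤ N Y, X i = Y i := fun i hi => (hY.2 i (le_trans hi (le_of_lt hlt))).symm
  have := (hN.2 (N Y) X hX Y hY.1 hk).mpr le_rfl
  omega

/-- The key lower bound for `sigmaUp` of `s·Y²_{N(Y)}` under property `(L_{(X,j)})`. -/
lemma sigmaUp_lower (T : Set (ℕ → EuclideanSpace ℝ (Fin 2)))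
    (N : (ℕ → EuclideanSpace ℝ (Fin 2)) → ℕ) (hN : BoundedStoppingRule T N)
    (X : ℕ → EuclideanSpace ℝ (Fin 2)) (hX : X ∈ T) (j : ℕ) (hj : j ≤ N X)
    (hL : PropertyL T X j) (s : ℝ) (f : (ℕ → EuclideanSpace ℝ (Fin 2)) → EReal)
    (hf : ∀ Y ∈ condSet T X j, f Y = ((s * Y (N Y) 1 : ℝ) : EReal)) :
    ((s * X j 1 : ℝ) : EReal) ≤ sigmaUp T X j f := by
  obtain ⟨nstar, hns⟩ := hN.1
  apply le_sInf
  rintro c ⟨V, H, n, hsh, rfl⟩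
  obtain ⟨hna, hjn, hpos, hdom⟩ := hsh
  set nb : ℕ := max (n 0) (max j nstar) with hnb
  -- the combined superhedge of 0
  set V' : ℕ → ℝ := fun m => Nat.casesOn m (V 0 - s * X j 1) (fun k => V (k + 1)) with hV'
  set H' : ℕ → ℕ → (ℕ → EuclideanSpace ℝ (Fin 2)) → EuclideanSpace ℝ (Fin 2) :=
    fun m => Nat.casesOn m
      (fun i Y => (if i < n 0 then H 0 i Y else 0) + repH N (-s) i Y)
      (fun k => H (k + 1)) with hH'
  set n' : ℕ → ℕ := fun m => Nat.casesOn m nb (fun k => n (k + 1)) with hn'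
  have hNY : ∀ Y ∈ condSet T X j, j ≤ N Y ∧ N Y ≤ nb := by
    intro Y hY
    exact ⟨stop_ge T N hN X hX j hj Y hY,
      le_trans (hns Y hY.1) (le_trans (le_max_right _ _) (le_max_right _ _))⟩
  have hpi0 : ∀ Y ∈ condSet T X j,
      piPort (H' 0) j (n' 0) (V' 0) Y
        = piPort (H 0) j (n 0) (V 0) Y - s * Y (N Y) 1 := by
    intro Y hY
    obtain ⟨h1, h2⟩ := hNY Y hY
    have hYj : Y j 1 = X j 1 := by rw [hY.2 j le_rfl]
    show (V 0 - s * X j 1) + ∑ i ∈ Finset.Ico j nb,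
        ⟪(if i < n 0 then H 0 i Y else 0) + repH N (-s) i Y, Y (i + 1) - Y i⟫_ℝ = _
    have hsplit : ∀ i ∈ Finset.Ico j nb,
        ⟪(if i < n 0 then H 0 i Y else 0) + repH N (-s) i Y, Y (i + 1) - Y i⟫_ℝ
          = ⟪(if i < n 0 then H 0 i Y else 0), Y (i + 1) - Y i⟫_ℝ
            + ⟪repH N (-s) i Y, Y (i + 1) - Y i⟫_ℝ := by
      intro i _; rw [inner_add_left]
    rw [Finset.sum_congr rfl hsplit, Finset.sum_add_distrib,
      trunc_sum (H 0) Y j (n 0) nb (le_max_left _ _),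
      rep_sum N (-s) j nb Y h1 h2]
    unfold piPort
    rw [hYj]
    ring
  have hzero : IsSuperhedge T X j (fun _ => (0 : EReal)) V' H' n' := by
    refine ⟨?_, ?_, ?_, ?_⟩
    · intro m
      cases m with
      | zero =>
        intro i hi Y hY Z hZ hag
        have hagfull : ∀ k ≤ i, Y k = Z k := by
          intro k hk
          rcases le_or_gt k j with h | h
          · rw [hY.2 k h, hZ.2 k h]
          · exact hag k (le_of_lt h) hk
        have hiff := hN.2 i Y hY.1 Z hZ.1 hagfull
        have hltiff : i < N Y ↔ i < N Z := by
          rw [← not_le, ← not_le, hiff]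
        have hrep : repH N (-s) i Y = repH N (-s) i Z := by
          unfold repH
          rw [if_congr hltiff rfl rfl]
        show (if i < n 0 then H 0 i Y else 0) + repH N (-s) i Y
            = (if i < n 0 then H 0 i Z else 0) + repH N (-s) i Z
        rw [hrep, hna 0 i hi Y hY Z hZ hag]
      | succ k => exact hna (k + 1)
    · intro m
      cases m with
      | zero => exact le_trans (le_max_left _ _) (le_max_right _ _)
      | succ k => exact hjn (k + 1)
    · intro m hm k hk Y hY
      cases m with
      | zero => omega
      | succ l => exact hpos (l + 1) (Nat.le_add_left 1 l) k hk Y hY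
    · intro Y hY
      have hd := hdom Y hY
      rw [hf Y hY] at hd
      have hts : (∑' m : ℕ, ENNReal.ofReal
            (piPort (H' (m + 1)) j (n' (m + 1)) (V' (m + 1)) Y))
          = ∑' m : ℕ, ENNReal.ofReal (piPort (H (m + 1)) j (n (m + 1)) (V (m + 1)) Y) :=
        rfl
      rw [hts, hpi0 Y hY]
      exact (ereal_shift (s * Y (N Y) 1) (piPort (H 0) j (n 0) (V 0) Y)
        (∑' m : ℕ, ENNReal.ofReal (piPort (H (m + 1)) j (n (m + 1)) (V (m + 1)) Y))).mp hd
  have hcost := hL V' H' n' hzero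
  unfold SuperhedgeCost at hcost ⊢
  have hts2 : (∑' m : ℕ, ENNReal.ofReal (V' (m + 1)))
      = ∑' m : ℕ, ENNReal.ofReal (V (m + 1)) := rfl
  rw [hts2] at hcost
  have : V' 0 = V 0 - s * X j 1 := rfl
  rw [this] at hcost
  exact (ereal_shift (s * X j 1) (V 0) (∑' m : ℕ, ENNReal.ofReal (V (m + 1)))).mpr hcost

/-- under property `(L_{(X,j)})`, the model price `X²_j` lies between the
underhedging and superhedging prices of `F(X) = X²_{N(X)}`. -/
theorem price_between_hedging_bounds
    (T : Set (ℕ → EuclideanSpace ℝ (Fin 2))) (x0 : EuclideanSpace ℝ (Fin 2))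
    (hT : IsTrajectorySet T x0)
    (N : (ℕ → EuclideanSpace ℝ (Fin 2)) → ℕ) (hN : BoundedStoppingRule T N)
    (X : ℕ → EuclideanSpace ℝ (Fin 2)) (hX : X ∈ T) (j : ℕ) (hj : j ≤ N X)
    (hL : PropertyL T X j) :
    sigmaDown T X j (fun Y => ((Y (N Y) 1 : ℝ) : EReal)) ≤ ((X j 1 : ℝ) : EReal) ∧
    ((X j 1 : ℝ) : EReal) ≤ sigmaUp T X j (fun Y => ((Y (N Y) 1 : ℝ) : EReal)) := by
  constructor
  · have h := sigmaUp_lower T N hN X hX j hj hL (-1)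
      (fun Y => - ((Y (N Y) 1 : ℝ) : EReal))
      (by intro Y hY
          show -((Y (N Y) 1 : ℝ) : EReal) = _
          rw [← EReal.coe_neg]; norm_num)
    rw [sigmaDown, EReal.neg_le]
    calc (- ((X j 1 : ℝ) : EReal)) = (((-1) * X j 1 : ℝ) : EReal) := by
          rw [← EReal.coe_neg]; norm_num
      _ ≤ _ := h
  · have h := sigmaUp_lower T N hN X hX j hj hL 1
      (fun Y => ((Y (N Y) 1 : ℝ) : EReal)) (by intro Y hY; norm_num)
    calc ((X j 1 : ℝ) : EReal) = ((1 * X j 1 : ℝ) : EReal) := by norm_num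
      _ ≤ _ := h

end Traj
end

section
/- Let 𝒳 be a 1-dimensional trajectory set on which (L)-a.e. holds, and let f : 𝒳 → ℝ be bounded with finite maturity n_f, i.e. f(X) = f(X_0,…,X_{n_f}) for every X ∈ 𝒳. Then σ̄f = inf{ V ∈ ℝ : there exists a non-anticipative family (H_k)_{0 ≤ k ≤ n_f−1} such that f(X) ≤ V + Σ_{k=0}^{n_f−1} H_k(X)(X_{k+1} − X_k) holds a.e. on 𝒳 (i.e. off a null set) }. -/
/-!
A single portfolio superhedging `f` off a null set `A` is, up to any `ε > 0`, a generalized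
superhedge at the same price: the norm hedges witnessing that `A` is null can be stacked into one
paying `⊤` on `A` at cost `ε` (countable subadditivity of `Ī`).

Conversely, let `(Vᵐ, Hᵐ)` be a generalized superhedge of finite cost, each portfolio stopped at
its horizon. The trajectories through a (moving) arbitrage node form a null set, and so do, for each
`k`, those along which `Σ_{m ≥ 1} Πᵐ_{0,k}` diverges, since the tail can be scaled down to any
cost. Off these sets, `f` is constant on `𝒳_{(Z, n_f)}` and the restarted superhedge at that node
costs `Σ_m Πᵐ_{0,n_f}(Z)`, so property `(L)` there gives `f(Z) ≤ Σ_m Πᵐ_{0,n_f}(Z)`. By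
telescoping, this sum is the payoff of the single portfolio with initial value `Σ_m Vᵐ` holding
`Σ_m Hᵐ_i` at time `i`.
-/

open scoped InnerProductSpace ENNReal
open Finset

open scoped NNReal

namespace Traj

section General

variable {E : Type*} {T : Set (ℕ → E)} {X Y Z : ℕ → E} {j k : ℕ}

lemma condSet_zero_eq {x0 : E} (hT : IsTrajectorySet T x0) (hX : X ∈ T) :
    condSet T X 0 = T :=
  Set.ext fun Y => ⟨And.left, fun hY => ⟨hY, fun i hi => by
    rw [Nat.le_zero.mp hi, hT.2 Y hY, hT.2 X hX]⟩⟩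

lemma mem_condSet_self (hX : X ∈ T) (k : ℕ) : X ∈ condSet T X k :=
  ⟨hX, fun _ _ => rfl⟩

lemma condSet_subset_condSet (hZ : Z ∈ condSet T X j) (hjk : j ≤ k) :
    condSet T Z k ⊆ condSet T X j :=
  fun _ hY => ⟨hY.1, fun i hi => (hY.2 i (hi.trans hjk)).trans (hZ.2 i hi)⟩

lemma condSet_congr (hYZ : ∀ i ≤ k, Y i = Z i) : condSet T Y k = condSet T Z k := by
  ext W
  exact and_congr_right fun _ => forall₂_congr fun i hi => by rw [hYZ i hi]

lemma nonAnticipative_zero_iff {x0 : E} (hT : IsTrajectorySet T x0) (hX : X ∈ T)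
    {F : Type*} {G : ℕ → (ℕ → E) → F} :
    NonAnticipative T X 0 G ↔
      ∀ i, ∀ Y ∈ T, ∀ Z ∈ T, (∀ k ≤ i, Y k = Z k) → G i Y = G i Z := by
  simp only [NonAnticipative, condSet_zero_eq hT hX, zero_le, true_implies]

def stopAt [Zero E] (H : ℕ → (ℕ → E) → E) (n : ℕ) : ℕ → (ℕ → E) → E :=
  fun i Y => if i < n then H i Y else 0

lemma NonAnticipative.stopped [Zero E] {H : ℕ → (ℕ → E) → E} (hH : NonAnticipative T X j H)
    (n : ℕ) : NonAnticipative T X j (stopAt H n) := by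
  intro i hji Y hY Z hZ hYZ
  simp only [Traj.stopAt, hH i hji Y hY Z hZ hYZ]

variable [NormedAddCommGroup E] [InnerProductSpace ℝ E]

lemma piPort_self (H : ℕ → (ℕ → E) → E) (j : ℕ) (V : ℝ) (Y : ℕ → E) :
    piPort H j j V Y = V := by
  simp [piPort]

lemma piPort_trans (H : ℕ → (ℕ → E) → E) (V : ℝ) (Y : ℕ → E) {l : ℕ}
    (hjk : j ≤ k) (hkl : k ≤ l) :
    piPort H k l (piPort H j k V Y) Y = piPort H j l V Y := by
  simp only [piPort, add_assoc, Finset.sum_Ico_consecutive _ hjk hkl]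

lemma piPort_succ (H : ℕ → (ℕ → E) → E) (V : ℝ) (Y : ℕ → E) (hjk : j ≤ k) :
    piPort H j (k + 1) V Y = piPort H j k V Y + ⟪H k Y, Y (k + 1) - Y k⟫_ℝ := by
  simp only [piPort, Finset.sum_Ico_succ_top hjk, add_assoc]

lemma piPort_smul (H : ℕ → (ℕ → E) → E) (r V : ℝ) (Y : ℕ → E) :
    piPort (fun i Y => r • H i Y) j k (r * V) Y = r * piPort H j k V Y := by
  simp only [piPort, real_inner_smul_left, ← Finset.mul_sum, mul_add]

lemma piPort_congr {H : ℕ → (ℕ → E) → E} (V : ℝ)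
    (hH : ∀ i, j ≤ i → i < k → H i Y = H i Z) (hYZ : ∀ i ≤ k, Y i = Z i) :
    piPort H j k V Y = piPort H j k V Z := by
  refine congrArg (V + ·) (Finset.sum_congr rfl fun i hi => ?_)
  obtain ⟨hji, hik⟩ := Finset.mem_Ico.mp hi
  rw [hH i hji hik, hYZ i hik.le, hYZ (i + 1) hik]

lemma NonAnticipative.piPort_eq {H : ℕ → (ℕ → E) → E} (hH : NonAnticipative T X j H)
    (V : ℝ) (hY : Y ∈ condSet T X j) (hZ : Z ∈ condSet T X j) (hYZ : ∀ i ≤ k, Y i = Z i) :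
    piPort H j k V Y = piPort H j k V Z :=
  piPort_congr V (fun i hji hik => hH i hji Y hY Z hZ fun l _ hli => hYZ l (hli.trans hik.le))
    hYZ

lemma piPort_stopAt (H : ℕ → (ℕ → E) → E) (n : ℕ) (V : ℝ) (Y : ℕ → E) :
    piPort (stopAt H n) j k V Y = piPort H j (min k n) V Y := by
  have h_inner (i : ℕ) : ⟪stopAt H n i Y, Y (i + 1) - Y i⟫_ℝ =
      if i < n then ⟪H i Y, Y (i + 1) - Y i⟫_ℝ else 0 := by
    unfold stopAt; split_ifs <;> simp
  simp only [piPort, h_inner, ← Finset.sum_filter, Finset.Ico_filter_lt]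

section Hedges

variable {f g : (ℕ → E) → ℝ≥0∞} {V : ℕ → ℝ} {H : ℕ → ℕ → (ℕ → E) → E} {n : ℕ → ℕ}

lemma IsNormHedge.mono (h : IsNormHedge T X j g V H n) (hfg : ∀ Y ∈ condSet T X j, f Y ≤ g Y) :
    IsNormHedge T X j f V H n :=
  ⟨h.1, h.2.1, h.2.2.1, fun Y hY => (hfg Y hY).trans (h.2.2.2 Y hY)⟩

lemma Ibar_le (h : IsNormHedge T X j f V H n) : Ibar T X j f ≤ ∑' m, ENNReal.ofReal (V m) :=
  sInf_le ⟨V, H, n, h, rfl⟩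

lemma exists_normHedge_lt_of_Ibar_lt {c : ℝ≥0∞} (h : Ibar T X j f < c) :
    ∃ V H n, IsNormHedge T X j f V H n ∧ ∑' m, ENNReal.ofReal (V m) < c := by
  obtain ⟨_, ⟨V, H, n, hVHn, rfl⟩, hc⟩ := sInf_lt_iff.mp h
  exact ⟨V, H, n, hVHn, hc⟩

lemma Ibar_mono (hfg : ∀ Y ∈ condSet T X j, f Y ≤ g Y) : Ibar T X j f ≤ Ibar T X j g :=
  le_sInf fun _ ⟨_, _, _, h, hc⟩ => hc ▸ Ibar_le (h.mono hfg)

lemma Ibar_eq_of_condSet_eq (hXY : condSet T X j = condSet T Y j) :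
    Ibar T X j f = Ibar T Y j f := by
  simp only [Ibar, IsNormHedge, NonAnticipative, hXY]

lemma tsum_unpair (u : ℕ → ℕ → ℝ≥0∞) :
    ∑' m : ℕ, u m.unpair.1 m.unpair.2 = ∑' l, ∑' m, u l m := by
  rw [← ENNReal.tsum_prod]
  exact Nat.pairEquiv.symm.tsum_eq fun p => u p.1 p.2

lemma IsNormHedge.tsum {g : ℕ → (ℕ → E) → ℝ≥0∞} {V : ℕ → ℕ → ℝ}
    {H : ℕ → ℕ → ℕ → (ℕ → E) → E} {n : ℕ → ℕ → ℕ}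
    (h : ∀ l, IsNormHedge T X j (g l) (V l) (H l) (n l)) :
    IsNormHedge T X j (fun Y => ∑' l, g l Y) (fun m => V m.unpair.1 m.unpair.2)
      (fun m => H m.unpair.1 m.unpair.2) (fun m => n m.unpair.1 m.unpair.2) := by
  refine ⟨fun m => (h _).1 _, fun m => (h _).2.1 _, fun m => (h _).2.2.1 _, fun Y hY => ?_⟩
  rw [tsum_unpair fun l m => ENNReal.ofReal (piPort (H l m) j (n l m) (V l m) Y)]
  exact ENNReal.tsum_le_tsum fun l => (h l).2.2.2 Y hY

lemma Ibar_tsum_le (g : ℕ → (ℕ → E) → ℝ≥0∞) :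
    Ibar T X j (fun Y => ∑' l, g l Y) ≤ ∑' l, Ibar T X j (g l) := by
  refine ENNReal.le_of_forall_pos_le_add fun ε hε hfin => ?_
  obtain ⟨δ, hδ, hδε⟩ := ENNReal.exists_pos_sum_of_countable (ENNReal.coe_ne_zero.mpr hε.ne') ℕ
  have hlt (l : ℕ) : Ibar T X j (g l) < Ibar T X j (g l) + δ l :=
    ENNReal.lt_add_right (ne_top_of_le_ne_top hfin.ne (ENNReal.le_tsum l))
      (ENNReal.coe_ne_zero.mpr (hδ l).ne')
  choose V H n hVHn hcost using fun l => exists_normHedge_lt_of_Ibar_lt (hlt l)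
  calc Ibar T X j (fun Y => ∑' l, g l Y)
      ≤ ∑' m, ENNReal.ofReal (V m.unpair.1 m.unpair.2) := Ibar_le (IsNormHedge.tsum hVHn)
    _ = ∑' l, ∑' m, ENNReal.ofReal (V l m) := tsum_unpair fun l m => ENNReal.ofReal (V l m)
    _ ≤ ∑' l, (Ibar T X j (g l) + δ l) := ENNReal.tsum_le_tsum fun l => (hcost l).le
    _ ≤ ∑' l, Ibar T X j (g l) + ε := by
      rw [ENNReal.tsum_add]
      exact add_le_add_right hδε.le _

lemma IsNormHedge.const_mul (h : IsNormHedge T X j g V H n) (r : ℝ≥0) :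
    IsNormHedge T X j (fun Y => r * g Y) (fun m => r * V m) (fun m i Y => (r : ℝ) • H m i Y) n := by
  refine ⟨fun m i hi Y hY Z hZ hYZ => by simp only [h.1 m i hi Y hY Z hZ hYZ], h.2.1,
    fun m k hk Y hY => ?_, fun Y hY => ?_⟩
  · rw [piPort_smul]
    exact mul_nonneg r.coe_nonneg (h.2.2.1 m k hk Y hY)
  · simp only [piPort_smul, ENNReal.ofReal_mul r.coe_nonneg, ENNReal.ofReal_coe_nnreal,
      ENNReal.tsum_mul_left]
    gcongr
    exact h.2.2.2 Y hY

/-- Scaling a finite-cost hedge of `g` down to cost `ε` still covers `{g = ⊤}`. -/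
lemma nullAt_setOf_eq_top (h : IsNormHedge T X j g V H n)
    (hV : ∑' m, ENNReal.ofReal (V m) ≠ ⊤) : NullAt T X j {Y | g Y = ⊤} := by
  refine le_antisymm (ENNReal.le_of_forall_pos_le_add fun ε hε _ => ?_) zero_le
  set C := (∑' m, ENNReal.ofReal (V m)).toNNReal
  have hr : (0 : ℝ≥0) < ε / (C + 1) := div_pos hε (by positivity)
  calc Ibar T X j ({Y | g Y = ⊤}.indicator fun _ => 1)
      ≤ Ibar T X j (fun Y => ↑(ε / (C + 1)) * g Y) := Ibar_mono fun Y _ => by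
        by_cases hY : g Y = ⊤
        · rw [hY, ENNReal.mul_top (ENNReal.coe_ne_zero.mpr hr.ne')]
          exact le_top
        · simp [hY]
    _ ≤ ∑' m, ENNReal.ofReal (↑(ε / (C + 1)) * V m) := Ibar_le (h.const_mul _)
    _ = ↑(ε / (C + 1) * C) := by
      simp only [ENNReal.ofReal_mul (NNReal.coe_nonneg _), ENNReal.ofReal_coe_nnreal,
        ENNReal.tsum_mul_left, C, ENNReal.coe_mul, ENNReal.coe_toNNReal hV]
    _ ≤ ↑ε := ENNReal.coe_le_coe.mpr <| calc
        ε / (C + 1) * C ≤ ε / (C + 1) * (C + 1) := by gcongr; exact le_self_add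
        _ = ε := div_mul_cancel₀ ε (by positivity)
    _ = 0 + ↑ε := (zero_add _).symm

lemma NullAt.mono {A B : Set (ℕ → E)} (hB : NullAt T X j B) (hAB : A ⊆ B) : NullAt T X j A :=
  nonpos_iff_eq_zero.mp <| (Ibar_mono fun Y _ =>
    Set.indicator_le_indicator_of_subset hAB (fun _ => zero_le) Y).trans hB.le

lemma NullAt.iUnion {A : ℕ → Set (ℕ → E)} (hA : ∀ l, NullAt T X j (A l)) :
    NullAt T X j (⋃ l, A l) := by
  refine nonpos_iff_eq_zero.mp <| calc
    Ibar T X j ((⋃ l, A l).indicator fun _ => 1)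
      ≤ Ibar T X j (fun Y => ∑' l, (A l).indicator (fun _ => 1) Y) := Ibar_mono fun Y _ => ?_
    _ ≤ ∑' l, Ibar T X j ((A l).indicator fun _ => 1) := Ibar_tsum_le _
    _ = 0 := ENNReal.tsum_eq_zero.mpr hA
  by_cases hY : Y ∈ ⋃ l, A l
  · obtain ⟨l, hl⟩ := Set.mem_iUnion.mp hY
    calc (⋃ l, A l).indicator (fun _ => (1 : ℝ≥0∞)) Y = (A l).indicator (fun _ => 1) Y := by
          rw [Set.indicator_of_mem hY, Set.indicator_of_mem hl]
      _ ≤ _ := ENNReal.le_tsum l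
  · simp [hY]

lemma NullAt.Ibar_indicator_top {A : Set (ℕ → E)} (hA : NullAt T X j A) :
    Ibar T X j (A.indicator fun _ => ⊤) = 0 := by
  refine nonpos_iff_eq_zero.mp <| calc
    Ibar T X j (A.indicator fun _ => ⊤)
      ≤ Ibar T X j (fun Y => ∑' _ : ℕ, A.indicator (fun _ => 1) Y) := Ibar_mono fun Y _ => ?_
    _ ≤ ∑' _ : ℕ, Ibar T X j (A.indicator fun _ => 1) := Ibar_tsum_le _
    _ = 0 := ENNReal.tsum_eq_zero.mpr fun _ => hA
  by_cases hY : Y ∈ A <;> simp [hY]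

lemma IsNull.of_nullAt {x0 : E} {A : Set (ℕ → E)} (hT : IsTrajectorySet T x0) (hX : X ∈ T)
    (hA : NullAt T X 0 A) : IsNull T A := fun Y hY =>
  (Ibar_eq_of_condSet_eq (by rw [condSet_zero_eq hT hX, condSet_zero_eq hT hY])).symm.trans hA

lemma IsNull.iUnion {A : ℕ → Set (ℕ → E)} (hA : ∀ l, IsNull T (A l)) : IsNull T (⋃ l, A l) :=
  fun X hX => NullAt.iUnion fun l => hA l X hX

lemma IsNull.union {A B : Set (ℕ → E)} (hA : IsNull T A) (hB : IsNull T B) :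
    IsNull T (A ∪ B) := by
  have hAB : A ∪ B = ⋃ l : ℕ, if l = 0 then A else B := by
    ext Y
    simp only [Set.mem_union, Set.mem_iUnion]
    constructor
    · rintro (hY | hY)
      exacts [⟨0, by simpa using hY⟩, ⟨1, by simpa using hY⟩]
    · rintro ⟨l, hl⟩
      split_ifs at hl
      exacts [Or.inl hl, Or.inr hl]
  rw [hAB]
  exact IsNull.iUnion fun l => by split_ifs; exacts [hA, hB]

end Hedges

section Superhedges

variable {f g : (ℕ → E) → EReal} {V : ℕ → ℝ} {H : ℕ → ℕ → (ℕ → E) → E} {n : ℕ → ℕ}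

lemma IsSuperhedge.mono (h : IsSuperhedge T X j g V H n) (hfg : ∀ Y ∈ condSet T X j, f Y ≤ g Y) :
    IsSuperhedge T X j f V H n :=
  ⟨h.1, h.2.1, h.2.2.1, fun Y hY => (hfg Y hY).trans (h.2.2.2 Y hY)⟩

lemma IsSuperhedge.succ_nonneg (h : IsSuperhedge T X j f V H n) (hX : X ∈ T) (m : ℕ) :
    0 ≤ V (m + 1) := by
  simpa only [piPort_self] using h.2.2.1 (m + 1) m.succ_pos j le_rfl X (mem_condSet_self hX j)

lemma IsSuperhedge.normHedge_tail (h : IsSuperhedge T X j f V H n) (hk : j ≤ k) :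
    IsNormHedge T X j (fun Y => ∑' m, ENNReal.ofReal (piPort (H (m + 1)) j k (V (m + 1)) Y))
      (fun m => V (m + 1)) (fun m => H (m + 1)) (fun _ => k) :=
  ⟨fun m => h.1 (m + 1), fun _ => hk, fun m => h.2.2.1 (m + 1) m.succ_pos, fun _ _ => le_rfl⟩

lemma isSuperhedge_of_normHedge_tail {g : (ℕ → E) → ℝ≥0∞} (h₀ : NonAnticipative T X j (H 0))
    (hn₀ : j ≤ n 0)
    (htail : IsNormHedge T X j g (fun m => V (m + 1)) (fun m => H (m + 1)) (fun m => n (m + 1)))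
    (hf : ∀ Y ∈ condSet T X j, f Y ≤ (piPort (H 0) j (n 0) (V 0) Y : EReal) + (g Y : EReal)) :
    IsSuperhedge T X j f V H n := by
  refine ⟨fun m => ?_, fun m => ?_, fun m hm => ?_, fun Y hY => ?_⟩
  · cases m
    exacts [h₀, htail.1 _]
  · cases m
    exacts [hn₀, htail.2.1 _]
  · obtain ⟨m, rfl⟩ := Nat.exists_eq_add_of_le' hm
    exact htail.2.2.1 m
  · exact (hf Y hY).trans (add_le_add_right (EReal.coe_ennreal_le_coe_ennreal_iff.mpr
      (htail.2.2.2 Y hY)) _)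

lemma IsSuperhedge.stopped (h : IsSuperhedge T X j f V H n) :
    IsSuperhedge T X j f V (fun m => stopAt (H m) (n m)) n := by
  refine ⟨fun m => (h.1 m).stopped _, h.2.1, fun m hm k hk Y hY => ?_, fun Y hY => ?_⟩
  · rw [piPort_stopAt]
    exact h.2.2.1 m hm _ (le_min hk (h.2.1 m)) Y hY
  · simpa only [piPort_stopAt, min_self] using h.2.2.2 Y hY

/-- Stopping at the horizons lets the restarted portfolios run to the common horizon
`max k (n m)` without changing their payoffs. -/
lemma IsSuperhedge.restrict (h : IsSuperhedge T X j f V H n) (hZ : Z ∈ condSet T X j)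
    (hjk : j ≤ k) :
    IsSuperhedge T Z k f (fun m => piPort (stopAt (H m) (n m)) j k (V m) Z)
      (fun m => stopAt (H m) (n m)) (fun m => max k (n m)) := by
  obtain ⟨hna, -, hpos, hf⟩ := h.stopped
  have hsub := condSet_subset_condSet hZ hjk
  have hrestart (m l : ℕ) (hkl : k ≤ l) (Y : ℕ → E) (hY : Y ∈ condSet T Z k) :
      piPort (stopAt (H m) (n m)) k l (piPort (stopAt (H m) (n m)) j k (V m) Z) Y =
        piPort (stopAt (H m) (n m)) j l (V m) Y := by
    rw [← (hna m).piPort_eq (V m) (hsub hY) hZ hY.2, piPort_trans _ _ _ hjk hkl]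
  have hhorizon (m : ℕ) (Y : ℕ → E) :
      piPort (stopAt (H m) (n m)) j (max k (n m)) (V m) Y =
        piPort (stopAt (H m) (n m)) j (n m) (V m) Y := by
    simp only [piPort_stopAt, min_self, min_eq_right (le_max_right k (n m))]
  refine ⟨fun m i hki Y hY Y' hY' hYY' =>
      hna m i (hjk.trans hki) Y (hsub hY) Y' (hsub hY') fun l _ hli => ?_,
    fun m => le_max_left _ _, fun m hm l hkl Y hY => ?_, fun Y hY => ?_⟩
  · rcases le_total l k with hlk | hkl
    · rw [hY.2 l hlk, hY'.2 l hlk]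
    · exact hYY' l hkl hli
  · rw [hrestart m l hkl Y hY]
    exact hpos m hm l (hjk.trans hkl) Y (hsub hY)
  · simpa only [hrestart _ _ (le_max_left _ _) Y hY, hhorizon] using hf Y (hsub hY)

lemma coe_le_coe_add_ennreal_iff {x a : ℝ} {S : ℝ≥0∞} :
    (x : EReal) ≤ a + S ↔ (0 : EReal) ≤ ((a - x : ℝ) : EReal) + S := by
  induction S using ENNReal.recTopCoe with
  | top => simp only [EReal.coe_ennreal_top, EReal.coe_add_top, le_top]
  | coe s =>
    rw [EReal.coe_nnreal_eq_coe_real]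
    norm_cast
    constructor <;> intro <;> linarith

lemma PropertyL.le_superhedgeCost (hL : PropertyL T X j) {a : ℝ}
    (h : IsSuperhedge T X j (fun _ => (a : EReal)) V H n) : (a : EReal) ≤ SuperhedgeCost V := by
  have hshift : IsSuperhedge T X j (fun _ => 0) (Function.update V 0 (V 0 - a)) H n := by
    refine ⟨h.1, h.2.1, fun m hm => ?_, fun Y hY => ?_⟩
    · rw [Function.update_of_ne (Nat.one_le_iff_ne_zero.mp hm)]
      exact h.2.2.1 m hm
    · have hpay : piPort (H 0) j (n 0) (V 0 - a) Y = piPort (H 0) j (n 0) (V 0) Y - a := by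
        simp only [piPort]; ring
      simp only [Function.update_self, Function.update_of_ne (Nat.succ_ne_zero _), hpay]
      exact coe_le_coe_add_ennreal_iff.mp (h.2.2.2 Y hY)
  have hcost := hL _ H n hshift
  simp only [SuperhedgeCost, Function.update_self, Function.update_of_ne (Nat.succ_ne_zero _)]
    at hcost
  exact coe_le_coe_add_ennreal_iff.mpr hcost

end Superhedges

end General

section OneDimensional

variable {T : Set (ℕ → ℝ)} {X Z : ℕ → ℝ} {x0 : ℝ}

lemma piPort_real (H : ℕ → (ℕ → ℝ) → ℝ) (j n : ℕ) (V : ℝ) (Y : ℕ → ℝ) :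
    piPort H j n V Y = V + ∑ i ∈ Finset.Ico j n, H i Y * (Y (i + 1) - Y i) := by
  simp only [piPort, Real.inner_apply]

open Classical in
/-- A one-step arbitrage at time `j` among the trajectories of `S`, or `0` if there is none. -/
noncomputable def arbitrageHolding (S : Set (ℕ → ℝ)) (j : ℕ) : ℝ :=
  if h : ∃ h : ℝ, (∀ Y ∈ S, 0 ≤ h * (Y (j + 1) - Y j)) ∧ ∃ Y ∈ S, h * (Y (j + 1) - Y j) ≠ 0
  then h.choose else 0

lemma arbitrageHolding_mul_nonneg {S : Set (ℕ → ℝ)} {j : ℕ} {Y : ℕ → ℝ} (hY : Y ∈ S) :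
    0 ≤ arbitrageHolding S j * (Y (j + 1) - Y j) := by
  unfold arbitrageHolding
  split_ifs with h
  · exact h.choose_spec.1 Y hY
  · simp

/-- In dimension one a nonzero holding earns something on every trajectory that moves. -/
lemma arbitrageHolding_mul_pos {j : ℕ} (hZ : Z ∈ T) (harb : ¬ ArbitrageFreeNode T Z j)
    (hmove : Z (j + 1) ≠ Z j) :
    0 < arbitrageHolding (condSet T Z j) j * (Z (j + 1) - Z j) := by
  simp only [ArbitrageFreeNode, Real.inner_apply, not_forall, not_or, not_lt] at harb
  obtain ⟨h, ⟨Y, hY, hYne⟩, hinf⟩ := harb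
  have hexists : ∃ h : ℝ, (∀ Y ∈ condSet T Z j, 0 ≤ h * (Y (j + 1) - Y j)) ∧
      ∃ Y ∈ condSet T Z j, h * (Y (j + 1) - Y j) ≠ 0 :=
    ⟨h, fun Y hY => EReal.coe_nonneg.mp (hinf.trans (biInf_le _ hY)), Y, hY, hYne⟩
  obtain ⟨hpos, Y', _, hY'ne⟩ := hexists.choose_spec
  rw [arbitrageHolding, dif_pos hexists]
  refine (hpos Z (mem_condSet_self hZ j)).lt_of_ne (mul_ne_zero ?_ (sub_ne_zero.mpr hmove)).symm
  exact left_ne_zero_of_mul hY'ne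

/-- Trading the arbitrage at every arbitrage node, at zero cost, gains a fixed positive amount
infinitely often along every trajectory of `𝒩`. -/
lemma isNull_arbNull : IsNull T (arbNull T) := by
  intro X hX
  set H : ℕ → (ℕ → ℝ) → ℝ := fun i Y => arbitrageHolding (condSet T Y i) i
  have hgain (m : ℕ) (Y : ℕ → ℝ) (hY : Y ∈ T) (i : ℕ) (hi : i < m) :
      H i Y * (Y (i + 1) - Y i) ≤ piPort H 0 m 0 Y := by
    rw [piPort_real, zero_add]
    exact Finset.single_le_sum (f := fun i => H i Y * (Y (i + 1) - Y i))
      (fun i _ => arbitrageHolding_mul_nonneg (mem_condSet_self hY i))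
      (Finset.mem_Ico.mpr ⟨Nat.zero_le i, hi⟩)
  have hhedge : IsNormHedge T X 0 (fun Y => ∑' m, ENNReal.ofReal (piPort H 0 m 0 Y))
      (fun _ => 0) (fun _ => H) id := by
    refine ⟨fun _ i _ Y _ Y' _ hYY' => ?_, fun m => Nat.zero_le m, fun _ k _ Y hY => ?_,
      fun _ _ => le_rfl⟩
    · exact congrArg (arbitrageHolding · i) (condSet_congr fun l hl => hYY' l (Nat.zero_le l) hl)
    · rw [piPort_real, zero_add]
      exact Finset.sum_nonneg fun i _ => arbitrageHolding_mul_nonneg (mem_condSet_self hY.1 i)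
  refine (nullAt_setOf_eq_top hhedge (by simp)).mono fun Z ⟨hZ, j, harb, hmove⟩ => ?_
  have hpos := arbitrageHolding_mul_pos hZ harb hmove
  refine top_le_iff.mp ?_
  calc ⊤ = ∑' _ : ℕ, ENNReal.ofReal (H j Z * (Z (j + 1) - Z j)) :=
        (ENNReal.tsum_const_eq_top_of_ne_zero (ENNReal.ofReal_pos.mpr hpos).ne').symm
    _ ≤ ∑' l : ℕ, ENNReal.ofReal (piPort H 0 (l + (j + 1)) 0 Z) :=
        ENNReal.tsum_le_tsum fun l => ENNReal.ofReal_le_ofReal (hgain _ Z hZ j (by omega))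
    _ ≤ ∑' m, ENNReal.ofReal (piPort H 0 m 0 Z) :=
        ENNReal.tsum_comp_le_tsum_of_injective (add_left_injective (j + 1)) _

lemma summable_of_tsum_ofReal_ne_top {u : ℕ → ℝ} (hu : ∀ m, 0 ≤ u m)
    (h : ∑' m, ENNReal.ofReal (u m) ≠ ⊤) : Summable u :=
  (ENNReal.summable_toReal h).congr fun m => ENNReal.toReal_ofReal (hu m)

lemma superhedgeCost_eq_coe_tsum {V : ℕ → ℝ} (hV : ∀ m, 0 ≤ V (m + 1)) (hs : Summable V) :
    SuperhedgeCost V = ((∑' m, V m : ℝ) : EReal) := by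
  rw [SuperhedgeCost, ← ENNReal.ofReal_tsum_of_nonneg hV ((summable_nat_add_iff 1).mpr hs),
    EReal.coe_ennreal_ofReal, max_eq_left (tsum_nonneg hV), ← EReal.coe_add,
    hs.tsum_eq_zero_add]

lemma tsum_eq_tsum_add_sum_tsum_sub {s : ℕ → ℕ → ℝ} (hs : ∀ k, Summable fun m => s m k)
    (n : ℕ) :
    ∑' m, s m n = ∑' m, s m 0 + ∑ i ∈ Finset.range n, ∑' m, (s m (i + 1) - s m i) := by
  simp only [fun i => (hs (i + 1)).tsum_sub (hs i),
    Finset.sum_range_sub (fun k => ∑' m, s m k)]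
  ring

lemma LaeHolds.propertyL (hL : LaeHolds T) (hZ : Z ∈ T \ arbNull T) (k : ℕ) :
    PropertyL T Z k := by
  rcases Nat.eq_zero_or_pos k with rfl | hk
  exacts [hL.2 Z hZ.1, hL.1 Z hZ k hk]

def aeSuperhedgePrices (T : Set (ℕ → ℝ)) (f : (ℕ → ℝ) → ℝ) (nf : ℕ) : Set EReal :=
  {c : EReal | ∃ V : ℝ, ∃ H : ℕ → (ℕ → ℝ) → ℝ, ∃ A : Set (ℕ → ℝ),
    (∀ i, i < nf → ∀ Y ∈ T, ∀ Z ∈ T, (∀ k ≤ i, Y k = Z k) → H i Y = H i Z) ∧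
    IsNull T A ∧
    (∀ Y ∈ T \ A, f Y ≤ V + ∑ i ∈ Finset.range nf, H i Y * (Y (i + 1) - Y i)) ∧
    c = (V : EReal)}

lemma sigmaUp_le_of_mem_aeSuperhedgePrices (hT : IsTrajectorySet T x0) (hX : X ∈ T)
    {f : (ℕ → ℝ) → ℝ} {nf : ℕ} {c : EReal} (hc : c ∈ aeSuperhedgePrices T f nf) :
    sigmaUp T X 0 (fun Y => (f Y : EReal)) ≤ c := by
  obtain ⟨V, H, A, hH, hA, hf, rfl⟩ := hc
  refine EReal.le_of_forall_lt_iff_le.mp fun z hz => ?_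
  have hε : 0 < ENNReal.ofReal (z - V) :=
    ENNReal.ofReal_pos.mpr (sub_pos.mpr (EReal.coe_lt_coe_iff.mp hz))
  obtain ⟨W, G, n, hG, hcost⟩ :=
    exists_normHedge_lt_of_Ibar_lt (((hA X hX).Ibar_indicator_top).symm ▸ hε)
  have hH₀ : NonAnticipative T X 0 (stopAt H nf) := by
    refine (nonAnticipative_zero_iff hT hX).mpr fun i Y hY Z hZ hYZ => ?_
    unfold stopAt
    split_ifs with hi
    exacts [hH i hi Y hY Z hZ hYZ, rfl]
  have hsh : IsSuperhedge T X 0 (fun Y => (f Y : EReal)) (fun m => Nat.casesOn m V W)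
      (fun m => Nat.casesOn m (stopAt H nf) G) (fun m => Nat.casesOn m nf n) := by
    refine isSuperhedge_of_normHedge_tail hH₀ (Nat.zero_le nf) hG fun Y hY => ?_
    by_cases hYA : Y ∈ A
    · simp [hYA]
    · have hfY := hf Y ⟨hY.1, hYA⟩
      rw [Finset.range_eq_Ico, ← piPort_real, ← min_self nf, ← piPort_stopAt] at hfY
      exact (EReal.coe_le_coe_iff.mpr hfY).trans
        (le_add_of_nonneg_right (EReal.coe_ennreal_nonneg _))
  calc sigmaUp T X 0 (fun Y => (f Y : EReal))
      ≤ SuperhedgeCost fun m => Nat.casesOn m V W := sInf_le ⟨_, _, _, hsh, rfl⟩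
    _ ≤ (V : EReal) + (ENNReal.ofReal (z - V) : EReal) :=
      add_le_add_right (EReal.coe_ennreal_le_coe_ennreal_iff.mpr hcost.le) _
    _ = z := by
      rw [EReal.coe_ennreal_ofReal, max_eq_left (sub_pos.mpr (EReal.coe_lt_coe_iff.mp hz)).le,
        ← EReal.coe_add, add_sub_cancel]

lemma superhedgeCost_mem_aeSuperhedgePrices (hT : IsTrajectorySet T x0) (hL : LaeHolds T)
    (hX : X ∈ T) {f : (ℕ → ℝ) → ℝ} {nf : ℕ}
    (hmat : ∀ X ∈ T, ∀ Y ∈ T, (∀ i ≤ nf, X i = Y i) → f X = f Y)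
    {V : ℕ → ℝ} {H : ℕ → ℕ → (ℕ → ℝ) → ℝ} {n : ℕ → ℕ}
    (h : IsSuperhedge T X 0 (fun Y => (f Y : EReal)) V H n)
    (hV : ∑' m, ENNReal.ofReal (V (m + 1)) ≠ ⊤) :
    SuperhedgeCost V ∈ aeSuperhedgePrices T f nf := by
  set Hs : ℕ → ℕ → (ℕ → ℝ) → ℝ := fun m => stopAt (H m) (n m)
  have hs := h.stopped
  set B : ℕ → Set (ℕ → ℝ) := fun k =>
    {Y | ∑' m, ENNReal.ofReal (piPort (Hs (m + 1)) 0 k (V (m + 1)) Y) = ⊤}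
  have hB (k : ℕ) : IsNull T (B k) :=
    IsNull.of_nullAt hT hX (nullAt_setOf_eq_top (hs.normHedge_tail (Nat.zero_le k)) hV)
  have hna (m : ℕ) := (nonAnticipative_zero_iff hT hX).mp (hs.1 m)
  refine ⟨∑' m, V m, fun i Y => ∑' m, Hs m i Y, arbNull T ∪ ⋃ k, B k,
    fun i _ Y hY Z hZ hYZ => tsum_congr fun m => hna m i Y hY Z hZ hYZ,
    isNull_arbNull.union (IsNull.iUnion hB), fun Z ⟨hZ, hZA⟩ => ?_,
    superhedgeCost_eq_coe_tsum (h.succ_nonneg hX) ((summable_nat_add_iff 1).mp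
      (summable_of_tsum_ofReal_ne_top (h.succ_nonneg hX) hV))⟩
  have hZ0 : Z ∈ condSet T X 0 := (condSet_zero_eq hT hX).symm ▸ hZ
  set s : ℕ → ℕ → ℝ := fun m k => piPort (Hs m) 0 k (V m) Z
  have hs_succ (m k : ℕ) : 0 ≤ s (m + 1) k :=
    hs.2.2.1 (m + 1) m.succ_pos k (Nat.zero_le k) Z hZ0
  have hsum (k : ℕ) : Summable fun m => s m k :=
    (summable_nat_add_iff 1).mp <| summable_of_tsum_ofReal_ne_top (hs_succ · k)
      fun htop => hZA (Or.inr (Set.mem_iUnion.mpr ⟨k, htop⟩))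
  have hmaturity : (f Z : EReal) ≤ SuperhedgeCost fun m => s m nf :=
    (hL.propertyL ⟨hZ, fun hZN => hZA (Or.inl hZN)⟩ nf).le_superhedgeCost
      ((h.restrict hZ0 (Nat.zero_le nf)).mono fun Y hY =>
        EReal.coe_le_coe_iff.mpr (hmat Y hY.1 Z hZ hY.2).ge)
  rw [superhedgeCost_eq_coe_tsum (hs_succ · nf) (hsum nf), EReal.coe_le_coe_iff] at hmaturity
  have hstep (m i : ℕ) : s m (i + 1) - s m i = Hs m i Z * (Z (i + 1) - Z i) := by
    simp only [s, piPort_succ _ _ _ (Nat.zero_le i), Real.inner_apply]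
    ring
  calc f Z ≤ ∑' m, s m nf := hmaturity
    _ = ∑' m, V m + ∑ i ∈ Finset.range nf, (∑' m, Hs m i Z) * (Z (i + 1) - Z i) := by
      simp only [tsum_eq_tsum_add_sum_tsum_sub hsum nf, hstep, tsum_mul_right, s, piPort_self]

end OneDimensional

theorem sigmaUp_eq_ae_singlePortfolio_inf_general
    (T : Set (ℕ → ℝ)) (x0 : ℝ) (hT : IsTrajectorySet T x0)
    (hLae : LaeHolds T)
    (f : (ℕ → ℝ) → ℝ) (nf : ℕ)
    (hmat : ∀ X ∈ T, ∀ Y ∈ T, (∀ i ≤ nf, X i = Y i) → f X = f Y) :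
    ∀ X ∈ T,
      sigmaUp T X 0 (fun Y => (f Y : EReal)) =
        sInf {c : EReal | ∃ V : ℝ, ∃ H : ℕ → (ℕ → ℝ) → ℝ, ∃ A : Set (ℕ → ℝ),
          (∀ i, i < nf → ∀ Y ∈ T, ∀ Z ∈ T,
            (∀ k ≤ i, Y k = Z k) → H i Y = H i Z) ∧
          IsNull T A ∧
          (∀ Y ∈ T \ A,
            f Y ≤ V + ∑ i ∈ Finset.range nf, H i Y * (Y (i + 1) - Y i)) ∧
          c = (V : EReal)} := by
  intro X hX
  change _ = sInf (aeSuperhedgePrices T f nf)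
  refine le_antisymm (le_sInf fun c hc => sigmaUp_le_of_mem_aeSuperhedgePrices hT hX hc)
    (le_sInf ?_)
  rintro _ ⟨V, H, n, h, rfl⟩
  by_cases hV : ∑' m, ENNReal.ofReal (V (m + 1)) = ⊤
  · simp [SuperhedgeCost, hV]
  · exact sInf_le (superhedgeCost_mem_aeSuperhedgePrices hT hLae hX hmat h hV)

/-- under `(L)`-a.e., the global superhedging price of a bounded payoff of finite
maturity equals the infimum of the initial values of single simple portfolios superhedging it
almost everywhere (i.e. off a null set). -/
theorem sigmaUp_eq_ae_singlePortfolio_inf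
    (T : Set (ℕ → ℝ)) (x0 : ℝ) (hT : IsTrajectorySet T x0)
    (hLae : LaeHolds T)
    (f : (ℕ → ℝ) → ℝ) (nf : ℕ)
    (hmat : ∀ X ∈ T, ∀ Y ∈ T, (∀ i ≤ nf, X i = Y i) → f X = f Y)
    (hbd : ∃ C : ℝ, ∀ X ∈ T, |f X| ≤ C) :
    ∀ X ∈ T,
      sigmaUp T X 0 (fun Y => (f Y : EReal)) =
        sInf {c : EReal | ∃ V : ℝ, ∃ H : ℕ → (ℕ → ℝ) → ℝ, ∃ A : Set (ℕ → ℝ),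
          (∀ i, i < nf → ∀ Y ∈ T, ∀ Z ∈ T,
            (∀ k ≤ i, Y k = Z k) → H i Y = H i Z) ∧
          IsNull T A ∧
          (∀ Y ∈ T \ A,
            f Y ≤ V + ∑ i ∈ Finset.range nf, H i Y * (Y (i + 1) - Y i)) ∧
          c = (V : EReal)} :=
  sigmaUp_eq_ae_singlePortfolio_inf_general T x0 hT hLae f nf hmat

end Traj
end

section
/- Let 𝒳 be a d-dimensional trajectory set and (X,n) a node such that there exists h ∈ ℝ^d with h·(X̂_{n+1} − X̂_n) > 0 for all X̂ ∈ 𝒳_{(X,n)}. Then the conditional set 𝒳_{(X,n)} is a null set: Ī_0(1_{𝒳_{(X,n)}}) = 0. -/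
/-!
Betting `h` at time `n` on the event that the path has followed `X` up to time `n` costs nothing,
never loses money, and strictly wins on `𝒳_{(X,n)}`. Countably many copies of this bet therefore
superhedge `∞ · 1_{𝒳_{(X,n)}}` at zero initial cost.
-/

open scoped InnerProductSpace ENNReal
open Finset

namespace Traj

section

variable {E : Type*}

theorem eq_of_mem_condSet_of_eqOn_Icc {T : Set (ℕ → E)} {X Y Z : ℕ → E} {j i : ℕ}
    (hY : Y ∈ condSet T X j) (hZ : Z ∈ condSet T X j)
    (hYZ : ∀ k, j ≤ k → k ≤ i → Y k = Z k) : ∀ k ≤ i, Y k = Z k := by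
  intro k hk
  rcases le_total j k with hjk | hkj
  · exact hYZ k hjk hk
  · rw [hY.2 k hkj, hZ.2 k hkj]

open Classical in
noncomputable def betAt [Zero E] (X : ℕ → E) (n : ℕ) (h : E) (i : ℕ) (Y : ℕ → E) : E :=
  if i = n ∧ ∀ m ≤ n, Y m = X m then h else 0

theorem nonAnticipative_betAt [Zero E] (T : Set (ℕ → E)) (X' X : ℕ → E) (j n : ℕ) (h : E) :
    NonAnticipative T X' j (betAt X n h) := by
  intro i _ Y hY Z hZ hYZ
  have hYZ' := eq_of_mem_condSet_of_eqOn_Icc hY hZ hYZ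
  unfold betAt
  by_cases hi : i = n
  · subst hi
    have hiff : (∀ m ≤ i, Y m = X m) ↔ ∀ m ≤ i, Z m = X m :=
      forall₂_congr fun m hm => by rw [hYZ' m hm]
    congr 1
    exact propext (and_congr_right fun _ => hiff)
  · rw [if_neg (fun hc => hi hc.1), if_neg (fun hc => hi hc.1)]

end

variable {E : Type*} [NormedAddCommGroup E] [InnerProductSpace ℝ E]

open Classical in
theorem piPort_betAt (X : ℕ → E) (n : ℕ) (h : E) (j k : ℕ) (Y : ℕ → E) :
    piPort (betAt X n h) j k 0 Y =
      if j ≤ n ∧ n < k ∧ ∀ m ≤ n, Y m = X m then ⟪h, Y (n + 1) - Y n⟫_ℝ else 0 := by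
  have hterm : ∀ i, ⟪betAt X n h i Y, Y (i + 1) - Y i⟫_ℝ =
      if i = n then (if ∀ m ≤ n, Y m = X m then ⟪h, Y (n + 1) - Y n⟫_ℝ else 0) else 0 := by
    intro i
    by_cases hi : i = n
    · subst hi
      by_cases hY : ∀ m ≤ i, Y m = X m
      · rw [betAt, if_pos ⟨rfl, hY⟩, if_pos rfl, if_pos hY]
      · rw [betAt, if_neg (fun hc => hY hc.2), if_pos rfl, if_neg hY, inner_zero_left]
    · rw [betAt, if_neg (fun hc => hi hc.1), if_neg hi, inner_zero_left]
  simp only [piPort, zero_add, hterm, Finset.sum_ite_eq', Finset.mem_Ico]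
  split_ifs <;> tauto

theorem nullAt_of_zero_cost_gain {T A : Set (ℕ → E)} {X : ℕ → E} {j N : ℕ}
    {H : ℕ → (ℕ → E) → E} (hH : NonAnticipative T X j H) (hN : j ≤ N)
    (hnonneg : ∀ k, j ≤ k → ∀ Y ∈ condSet T X j, 0 ≤ piPort H j k 0 Y)
    (hgain : ∀ Y ∈ condSet T X j, Y ∈ A → 0 < piPort H j N 0 Y) :
    NullAt T X j A := by
  refine le_antisymm (sInf_le ⟨fun _ => 0, fun _ => H, fun _ => N,
    ⟨fun _ => hH, fun _ => hN, fun _ => hnonneg, ?_⟩, by simp⟩) zero_le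
  intro Y hY
  by_cases hA : Y ∈ A
  · rw [ENNReal.tsum_const_eq_top_of_ne_zero (ENNReal.ofReal_pos.2 (hgain Y hY hA)).ne']
    exact le_top
  · simp [hA]

theorem nullAt_condSet_of_strict_gain {T : Set (ℕ → E)} {X X' : ℕ → E} {j n : ℕ} {h : E}
    (hjn : j ≤ n) (hh : ∀ Y ∈ condSet T X n, 0 < ⟪h, Y (n + 1) - Y n⟫_ℝ) :
    NullAt T X' j (condSet T X n) := by
  refine nullAt_of_zero_cost_gain (nonAnticipative_betAt T X' X j n h) (N := n + 1)
    (by omega) (fun k _ Y hY => ?_) (fun Y _ hYn => ?_)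
  · rw [piPort_betAt]
    split_ifs with hc
    · exact (hh Y ⟨hY.1, hc.2.2⟩).le
    · exact le_rfl
  · rw [piPort_betAt, if_pos ⟨hjn, n.lt_succ_self, hYn.2⟩]
    exact hh Y hYn

theorem condSet_null_of_strict_gain_general
    (d : ℕ) (T : Set (ℕ → EuclideanSpace ℝ (Fin d)))
    (X : ℕ → EuclideanSpace ℝ (Fin d)) (n : ℕ)
    (harb : ∃ h : EuclideanSpace ℝ (Fin d),
      ∀ Y ∈ condSet T X n, 0 < ⟪h, Y (n + 1) - Y n⟫_ℝ) :
    IsNull T (condSet T X n) := by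
  obtain ⟨h, hh⟩ := harb
  exact fun X' _ => nullAt_condSet_of_strict_gain (X' := X') (Nat.zero_le n) hh

/-- if at node `(X,n)` some vector `h` yields a strictly positive gain against all
futures, then the conditional set `𝒳_{(X,n)}` is a null set. -/
theorem condSet_null_of_strict_gain
    (d : ℕ) (T : Set (ℕ → EuclideanSpace ℝ (Fin d))) (x0 : EuclideanSpace ℝ (Fin d))
    (hT : IsTrajectorySet T x0)
    (X : ℕ → EuclideanSpace ℝ (Fin d)) (hX : X ∈ T) (n : ℕ)
    (harb : ∃ h : EuclideanSpace ℝ (Fin d),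
      ∀ Y ∈ condSet T X n, 0 < ⟪h, Y (n + 1) - Y n⟫_ℝ) :
    IsNull T (condSet T X n) :=
  condSet_null_of_strict_gain_general d T X n harb

end Traj
end

section
/- Let 𝒳 be a d-dimensional trajectory set and (X,j) a type II arbitrage node, i.e. 0 does not belong to the closure of the convex hull of ΔX(𝒳_{(X,j)}) = {X'_{j+1} − X'_j : X' ∈ 𝒳_{(X,j)}}. Then σ̄_j f(X) = −∞ for every function f : 𝒳 → [−∞,∞]. -/
open scoped InnerProductSpace ENNReal
open Finset

/-!
Separating `0` from the closed convex hull of the one-step increments gives a direction `h`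
with `⟪h, Y (j + 1) - Y j⟫ > 0` on the whole conditional set. Buying `h` at time `j` and
selling at `j + 1` costs nothing and is nonnegative, so countably many copies of it form an
admissible generalized portfolio whose sum is `+∞` everywhere on the node. Together with a
constant `r` it superhedges any `f` at cost `r`, for every real `r`.
-/

namespace Traj

variable {E : Type*} [NormedAddCommGroup E] [InnerProductSpace ℝ E]

theorem exists_forall_inner_pos_of_zero_notMem_closure_convexHull [CompleteSpace E]
    {S : Set E} (hS : (0 : E) ∉ closure (convexHull ℝ S)) :
    ∃ h : E, ∀ y ∈ S, 0 < ⟪h, y⟫_ℝ := by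
  obtain ⟨φ, u, hu0, hu⟩ := geometric_hahn_banach_point_closed
    (convex_convexHull ℝ S).closure isClosed_closure hS
  refine ⟨(InnerProductSpace.toDual ℝ E).symm φ, fun y hy => ?_⟩
  rw [InnerProductSpace.toDual_symm_apply]
  exact (map_zero φ ▸ hu0).trans (hu y (subset_closure (subset_convexHull ℝ S hy)))

def holdAt (j : ℕ) (h : E) : ℕ → (ℕ → E) → E :=
  fun i _ => if i = j then h else 0

theorem piPort_holdAt (j k : ℕ) (h : E) (V : ℝ) (Y : ℕ → E) :
    piPort (holdAt j h) j k V Y = V + if j < k then ⟪h, Y (j + 1) - Y j⟫_ℝ else 0 := by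
  have hterm : ∀ i, ⟪holdAt j h i Y, Y (i + 1) - Y i⟫_ℝ
      = if j = i then ⟪h, Y (j + 1) - Y j⟫_ℝ else 0 := by
    intro i
    by_cases hij : j = i
    · subst hij; simp [holdAt]
    · simp [holdAt, hij, Ne.symm hij]
  simp only [piPort, hterm, Finset.sum_ite_eq, Finset.mem_Ico, le_refl, true_and]

theorem superhedgeCost_ite_zero (r : ℝ) :
    SuperhedgeCost (fun m => if m = 0 then r else 0) = (r : EReal) := by
  simp [SuperhedgeCost]

theorem isSuperhedge_holdAt {T : Set (ℕ → E)} {X : ℕ → E} {j : ℕ} {h : E}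
    (hpos : ∀ Y ∈ condSet T X j, 0 < ⟪h, Y (j + 1) - Y j⟫_ℝ) (f : (ℕ → E) → EReal) (r : ℝ) :
    IsSuperhedge T X j f (fun m => if m = 0 then r else 0) (fun _ => holdAt j h)
      (fun m => if m = 0 then j else j + 1) := by
  refine ⟨fun _ _ _ _ _ _ _ _ => rfl, fun m => by dsimp only; split_ifs <;> omega, ?_,
    fun Y hY => ?_⟩
  · intro m hm k _ Y hY
    dsimp only
    rw [piPort_holdAt, if_neg (by omega : m ≠ 0), zero_add]
    split_ifs
    exacts [(hpos Y hY).le, le_rfl]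
  · have hsum : ∑' m : ℕ, ENNReal.ofReal (piPort (holdAt j h) j (j + 1) 0 Y) = ∞ := by
      refine ENNReal.tsum_const_eq_top_of_ne_zero ?_
      simpa [piPort_holdAt] using hpos Y hY
    simp only [Nat.add_one_ne_zero, if_false, hsum]
    exact le_top.trans_eq (EReal.add_top_of_ne_bot (EReal.coe_ne_bot _)).symm

theorem sigmaUp_eq_bot_of_forall_inner_pos {T : Set (ℕ → E)} {X : ℕ → E} {j : ℕ} {h : E}
    (hpos : ∀ Y ∈ condSet T X j, 0 < ⟪h, Y (j + 1) - Y j⟫_ℝ) (f : (ℕ → E) → EReal) :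
    sigmaUp T X j f = ⊥ := by
  refine (EReal.eq_bot_iff_forall_lt _).2 fun y => ?_
  calc sigmaUp T X j f ≤ ((y - 1 : ℝ) : EReal) :=
        sInf_le ⟨_, _, _, isSuperhedge_holdAt hpos f (y - 1), (superhedgeCost_ite_zero _).symm⟩
    _ < y := by exact_mod_cast sub_one_lt y

theorem sigmaUp_eq_bot_of_typeII_general
    (d : ℕ) (T : Set (ℕ → EuclideanSpace ℝ (Fin d)))
    (X : ℕ → EuclideanSpace ℝ (Fin d)) (j : ℕ)
    (hII : (0 : EuclideanSpace ℝ (Fin d)) ∉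
      closure (convexHull ℝ ((fun Y => Y (j + 1) - Y j) '' condSet T X j))) :
    ∀ f : (ℕ → EuclideanSpace ℝ (Fin d)) → EReal, sigmaUp T X j f = ⊥ := by
  obtain ⟨h, hh⟩ := exists_forall_inner_pos_of_zero_notMem_closure_convexHull hII
  exact sigmaUp_eq_bot_of_forall_inner_pos fun Y hY => hh _ ⟨Y, hY, rfl⟩

/-- at a type II arbitrage node the superhedging operator takes the value `-∞`
on every function. -/
theorem sigmaUp_eq_bot_of_typeII
    (d : ℕ) (T : Set (ℕ → EuclideanSpace ℝ (Fin d))) (x0 : EuclideanSpace ℝ (Fin d))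
    (hT : IsTrajectorySet T x0)
    (X : ℕ → EuclideanSpace ℝ (Fin d)) (hX : X ∈ T) (j : ℕ)
    (hII : (0 : EuclideanSpace ℝ (Fin d)) ∉
      closure (convexHull ℝ ((fun Y => Y (j + 1) - Y j) '' condSet T X j))) :
    ∀ f : (ℕ → EuclideanSpace ℝ (Fin d)) → EReal, sigmaUp T X j f = ⊥ :=
  sigmaUp_eq_bot_of_typeII_general d T X j hII

end Traj
end

section
/- Let 𝒳 be a d-dimensional trajectory set in which every node (X,k) is arbitrage-free. Then 𝒳 admits no arbitrage opportunity: there is no global non-anticipative portfolio H = (H_i)_{i≥0} (each H_i : 𝒳 → ℝ^d with H_i(X) depending only on (X_0,…,X_i)) and bounded non-anticipative stopping rule N : 𝒳 → ℕ such that Σ_{i=0}^{N(X)−1} H_i(X)·Δ_i X ≥ 0 for all X ∈ 𝒳 while Σ_{i=0}^{N(X*)−1} H_i(X*)·Δ_i X* > 0 for some X* ∈ 𝒳. -/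
open scoped InnerProductSpace ENNReal
open Finset

namespace Traj

/-- Key downward induction: if the gain from time `k` on is nonnegative on a conditional
set at an arbitrage-free node, it vanishes identically there. -/
theorem aux_key {E : Type*} [NormedAddCommGroup E] [InnerProductSpace ℝ E]
    (T : Set (ℕ → E)) (H : ℕ → (ℕ → E) → E) (N : (ℕ → E) → ℕ) (nstar : ℕ)
    (hH : ∀ i : ℕ, ∀ X ∈ T, ∀ Y ∈ T, (∀ m ≤ i, X m = Y m) → H i X = H i Y)
    (hNb : ∀ X ∈ T, N X ≤ nstar)
    (hN : ∀ k : ℕ, ∀ X ∈ T, ∀ Y ∈ T, (∀ i ≤ k, X i = Y i) → (N X ≤ k ↔ N Y ≤ k))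
    (hAF : ∀ X ∈ T, ∀ k : ℕ, ArbitrageFreeNode T X k) :
    ∀ j k : ℕ, nstar ≤ k + j → ∀ X ∈ T,
      (∀ Z ∈ condSet T X k, 0 ≤ ∑ i ∈ Finset.Ico k (N Z), ⟪H i Z, Z (i + 1) - Z i⟫_ℝ) →
      ∀ Z ∈ condSet T X k, ∑ i ∈ Finset.Ico k (N Z), ⟪H i Z, Z (i + 1) - Z i⟫_ℝ = 0 := by
  intro j
  induction j with
  | zero =>
    intro k hk X hX _ Z hZ
    have hZT : Z ∈ T := hZ.1
    have : N Z ≤ k := le_trans (hNb Z hZT) (by simpa using hk)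
    rw [Finset.Ico_eq_empty (by omega), Finset.sum_empty]
  | succ j ih =>
    intro k hk X hX hpos Z hZ
    have hZT : Z ∈ T := hZ.1
    have hZXk : ∀ i ≤ k, Z i = X i := hZ.2
    -- membership transfer lemmas
    have condTrans : ∀ W : ℕ → E, W ∈ condSet T X k → ∀ V ∈ condSet T W (k + 1),
        V ∈ condSet T X k := by
      intro W hW V hV
      exact ⟨hV.1, fun i hi => (hV.2 i (by omega)).trans (hW.2 i hi)⟩
    by_cases hNX : N X ≤ k
    · -- stopped: sum is empty
      have : N Z ≤ k := (hN k X hX Z hZT (fun i hi => (hZXk i hi).symm)).mp hNX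
      rw [Finset.Ico_eq_empty (by omega), Finset.sum_empty]
    · -- not stopped at k
      have hNcond : ∀ W ∈ condSet T X k, k < N W := by
        intro W hW
        have := (hN k X hX W hW.1 (fun i hi => (hW.2 i hi).symm)).not
        omega
      set h : E := H k X with hh
      have hHcond : ∀ W ∈ condSet T X k, H k W = h := by
        intro W hW
        exact (hH k X hX W hW.1 (fun m hm => (hW.2 m hm).symm)).symm
      have hsplit : ∀ W ∈ condSet T X k,
          ∑ i ∈ Finset.Ico k (N W), ⟪H i W, W (i + 1) - W i⟫_ℝ
            = ⟪h, W (k + 1) - W k⟫_ℝ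
              + ∑ i ∈ Finset.Ico (k + 1) (N W), ⟪H i W, W (i + 1) - W i⟫_ℝ := by
        intro W hW
        rw [Finset.sum_eq_sum_Ico_succ_bot (hNcond W hW), hHcond W hW]
      -- Step A: one-step gains with strategy h are nonnegative on the node
      have stepA : ∀ W ∈ condSet T X k, 0 ≤ ⟪h, W (k + 1) - W k⟫_ℝ := by
        intro W hW
        by_contra hneg
        push_neg at hneg
        have hposk1 : ∀ V ∈ condSet T W (k + 1),
            0 < ∑ i ∈ Finset.Ico (k + 1) (N V), ⟪H i V, V (i + 1) - V i⟫_ℝ := by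
          intro V hV
          have hVX : V ∈ condSet T X k := condTrans W hW V hV
          have h1 : 0 ≤ ∑ i ∈ Finset.Ico k (N V), ⟪H i V, V (i + 1) - V i⟫_ℝ :=
            hpos V hVX
          have h2 := hsplit V hVX
          have hVW : V (k + 1) - V k = W (k + 1) - W k := by
            rw [hV.2 (k + 1) le_rfl, hV.2 k (by omega)]
          rw [hVW] at h2
          nlinarith [h1, h2]
        have h0 : ∑ i ∈ Finset.Ico (k + 1) (N W), ⟪H i W, W (i + 1) - W i⟫_ℝ = 0 := by
          refine ih (k + 1) (by omega) W hW.1 (fun V hV => (hposk1 V hV).le) W ?_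
          exact ⟨hW.1, fun i _ => rfl⟩
        have := hposk1 W ⟨hW.1, fun i _ => rfl⟩
        linarith
      -- Step B: arbitrage-freeness forces one-step gains to vanish on the node
      have hzero : ∀ W ∈ condSet T X k, ⟪h, W (k + 1) - W k⟫_ℝ = 0 := by
        rcases hAF X hX k h with hz | hlt
        · exact hz
        · exfalso
          refine absurd hlt (not_lt.mpr ?_)
          refine le_iInf fun W => le_iInf fun hW => ?_
          exact_mod_cast stepA W hW
      -- Step C: conclude
      have hQ1 : ∀ V ∈ condSet T Z (k + 1),
          0 ≤ ∑ i ∈ Finset.Ico (k + 1) (N V), ⟪H i V, V (i + 1) - V i⟫_ℝ := by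
        intro V hV
        have hVX : V ∈ condSet T X k := condTrans Z hZ V hV
        have h1 := hpos V hVX
        have h2 := hsplit V hVX
        rw [hzero V hVX] at h2
        linarith
      have h0 : ∑ i ∈ Finset.Ico (k + 1) (N Z), ⟪H i Z, Z (i + 1) - Z i⟫_ℝ = 0 :=
        ih (k + 1) (by omega) Z hZT hQ1 Z ⟨hZT, fun i _ => rfl⟩
      rw [hsplit Z hZ, hzero Z hZ, h0, add_zero]

/-- if every node of a trajectory set is arbitrage-free, then there is no
arbitrage opportunity. -/
theorem no_arbitrage_of_all_nodes_arbitrageFree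
    (d : ℕ) (T : Set (ℕ → EuclideanSpace ℝ (Fin d))) (x0 : EuclideanSpace ℝ (Fin d))
    (hT : IsTrajectorySet T x0)
    (hAF : ∀ X ∈ T, ∀ k : ℕ, ArbitrageFreeNode T X k) :
    ¬ ∃ (H : ℕ → (ℕ → EuclideanSpace ℝ (Fin d)) → EuclideanSpace ℝ (Fin d))
        (N : (ℕ → EuclideanSpace ℝ (Fin d)) → ℕ),
        (∀ i : ℕ, ∀ X ∈ T, ∀ Y ∈ T, (∀ m ≤ i, X m = Y m) → H i X = H i Y) ∧
        BoundedStoppingRule T N ∧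
        (∀ X ∈ T, 0 ≤ ∑ i ∈ Finset.range (N X), ⟪H i X, X (i + 1) - X i⟫_ℝ) ∧
        (∃ X ∈ T, 0 < ∑ i ∈ Finset.range (N X), ⟪H i X, X (i + 1) - X i⟫_ℝ) := by
  rintro ⟨H, N, hH, ⟨⟨nstar, hNb⟩, hN⟩, hge, X, hX, hgt⟩
  have key := aux_key T H N nstar hH hNb hN hAF nstar 0 (by omega) X hX
  have hcond0 : ∀ Z : ℕ → EuclideanSpace ℝ (Fin d), Z ∈ condSet T X 0 ↔ Z ∈ T := by
    intro Z
    constructor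
    · exact fun h => h.1
    · intro hZ
      refine ⟨hZ, fun i hi => ?_⟩
      interval_cases i
      rw [hT.2 Z hZ, hT.2 X hX]
  have h0 : ∑ i ∈ Finset.Ico 0 (N X), ⟪H i X, X (i + 1) - X i⟫_ℝ = 0 := by
    refine key ?_ X ((hcond0 X).mpr hX)
    intro Z hZ
    simpa [← Finset.range_eq_Ico] using hge Z ((hcond0 Z).mp hZ)
  rw [← Finset.range_eq_Ico] at h0
  linarith

end Traj
end
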